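/- For every a ∈ I the following identity holds in the group algebra ℤ[Q]: ∏_{α∈Φ⁺} (1 − e^{−α})^{[α]_a} · ∏_{α∈Φ⁺} (1 − e^{−s_a(α)})^{[α]_a} = (1 − e^{α_a})(1 − e^{−α_a}) · ∏_{α∈Φ⁺} (1 − e^{−α})^{m_a(α)}, where m_a(α) := −∑_{b : C_{ab} < 0} C_{ab}·[α]_b (a nonnegative integer for α ∈ Φ⁺). -/

import Mathlib

/-- The exponential `e^v` in the group algebra `ℤ[V]` (the group algebra `ℤ[Q]` of the
root lattice, realized inside the group algebra of the ambient vector space). -/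
noncomputable def expZ {V : Type*} [AddCommGroup V] (v : V) : AddMonoidAlgebra ℤ V :=
  AddMonoidAlgebra.single v 1

/-!
The simple reflection `s_a` permutes `Φ⁺ \ {α_a}` and sends `α_a` to `-α_a`. For a positive root
`α ≠ α_a`, `[s_a α]_a = [α]_a - ⟨α, α_a^∨⟩ = [α]_a - ∑_b C_{ab} [α]_b = -[α]_a + m_a(α)`, because
`C_{aa} = 2` and the only other nonzero entries of the `a`-th row of `C` are negative.
Reindexing the second product by `s_a` therefore merges the two products over `Φ⁺ \ {α_a}` into
`∏ (1 - e^{-α})^{m_a(α)}`, while the factors at `α_a` give `(1 - e^{-α_a})(1 - e^{α_a})`, and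
`m_a(α_a) = 0`.
-/

open Finset

theorem Finset.prod_pow_mul_prod_comp_pow {ι M : Type*} [CommMonoid M] {S : Finset ι}
    {σ : ι → ι} (hσS : ∀ i ∈ S, σ i ∈ S) (hσσ : ∀ i ∈ S, σ (σ i) = i) (f : ι → M)
    {n k : ι → ℕ} (hnk : ∀ i ∈ S, n i + n (σ i) = k i) :
    (∏ i ∈ S, f i ^ n i) * ∏ i ∈ S, f (σ i) ^ n i = ∏ i ∈ S, f i ^ k i := by
  have hreindex : ∏ i ∈ S, f (σ i) ^ n i = ∏ i ∈ S, f i ^ n (σ i) :=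
    prod_nbij' σ σ hσS hσS hσσ hσσ fun i hi => by rw [hσσ i hi]
  rw [hreindex, ← prod_mul_distrib]
  exact prod_congr rfl fun i hi => by rw [← pow_add, hnk i hi]

theorem sum_mul_eq_two_mul_add_sum_filter_neg {I : Type*} [Fintype I] {C : I → I → ℤ}
    (hCdiag : ∀ a, C a a = 2) (hCoff : ∀ a b, a ≠ b → C a b ≤ 0) (a : I) (x : I → ℤ) :
    ∑ b, C a b * x b = 2 * x a + ∑ b ∈ univ.filter (fun b => C a b < 0), C a b * x b := by
  rw [← sum_filter_not_add_sum_filter _ (fun b => C a b < 0)]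
  congr 1
  rw [sum_eq_single_of_mem a (by simp [hCdiag]), hCdiag]
  intro b hb hba
  have hCab : C a b = 0 := le_antisymm (hCoff a b (Ne.symm hba)) (by simpa using hb)
  rw [hCab, zero_mul]

section RootCoefficients

variable {I V : Type*} [AddCommGroup V] [Module ℚ V]
  {Φ Φpos : Set V} {sroot : I → V} {cpair : I → V →ₗ[ℚ] ℚ} {coeff : V → I → ℤ}
  {C : I → I → ℤ} {s : I → V ≃ₗ[ℚ] V} {a : I} {β : V}

theorem reflection_eq_preReflection (hs : ∀ a v, s a v = v - cpair a v • sroot a) (a : I) :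
    ⇑(s a) = Module.preReflection (sroot a) (cpair a) :=
  funext fun v => (hs a v).trans (Module.preReflection_apply _ _ _).symm

theorem cpair_simple_self (hC : ∀ a b, (C a b : ℚ) = cpair a (sroot b))
    (hCdiag : ∀ a, C a a = 2) (a : I) : cpair a (sroot a) = 2 := by
  rw [← hC, hCdiag, Int.cast_ofNat]

theorem reflection_involutive (hC : ∀ a b, (C a b : ℚ) = cpair a (sroot b))
    (hCdiag : ∀ a, C a a = 2) (hs : ∀ a v, s a v = v - cpair a v • sroot a) (a : I) :
    Function.Involutive (s a) := by
  rw [reflection_eq_preReflection hs]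
  exact Module.involutive_preReflection (cpair_simple_self hC hCdiag a)

theorem reflection_simple_self (hC : ∀ a b, (C a b : ℚ) = cpair a (sroot b))
    (hCdiag : ∀ a, C a a = 2) (hs : ∀ a v, s a v = v - cpair a v • sroot a) (a : I) :
    s a (sroot a) = -sroot a := by
  rw [reflection_eq_preReflection hs]
  exact Module.preReflection_apply_self (cpair_simple_self hC hCdiag a)

variable [Fintype I]

theorem coeff_eq_of_eq_sum (hindep : LinearIndependent ℚ sroot)
    (hcoeff : ∀ β ∈ Φ, β = ∑ b, coeff β b • sroot b) (hβ : β ∈ Φ) {f : I → ℤ}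
    (h : β = ∑ b, f b • sroot b) : coeff β = f :=
  funext <| Fintype.linearIndependent_iffₛ.mp (hindep.restrict_scalars' ℤ) _ _
    ((hcoeff β hβ).symm.trans h)

theorem coeff_simple [DecidableEq I] (hindep : LinearIndependent ℚ sroot)
    (hcoeff : ∀ β ∈ Φ, β = ∑ b, coeff β b • sroot b) (hsimple : sroot a ∈ Φ) :
    coeff (sroot a) = Pi.single a 1 :=
  coeff_eq_of_eq_sum hindep hcoeff hsimple <| by simp [Pi.single_apply, ite_smul]

theorem coeff_neg (hindep : LinearIndependent ℚ sroot)
    (hcoeff : ∀ β ∈ Φ, β = ∑ b, coeff β b • sroot b) (hβ : β ∈ Φ) (hnβ : -β ∈ Φ) :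
    coeff (-β) = -coeff β :=
  coeff_eq_of_eq_sum hindep hcoeff hnβ <| by
    simp only [Pi.neg_apply, neg_smul, sum_neg_distrib, ← hcoeff β hβ]

theorem cpair_sum_zsmul (hC : ∀ a b, (C a b : ℚ) = cpair a (sroot b)) (a : I) (x : I → ℤ) :
    cpair a (∑ b, x b • sroot b) = ((∑ b, C a b * x b : ℤ) : ℚ) := by
  simp [map_zsmul, hC, mul_comm]

theorem coeff_reflection [DecidableEq I] (hindep : LinearIndependent ℚ sroot)
    (hcoeff : ∀ β ∈ Φ, β = ∑ b, coeff β b • sroot b)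
    (hC : ∀ a b, (C a b : ℚ) = cpair a (sroot b)) (hs : ∀ a v, s a v = v - cpair a v • sroot a)
    (hβ : β ∈ Φ) (hsβ : s a β ∈ Φ) :
    coeff (s a β) = coeff β - Pi.single a (∑ b, C a b * coeff β b) := by
  refine coeff_eq_of_eq_sum hindep hcoeff hsβ ?_
  conv_lhs => rw [hs, hcoeff β hβ, cpair_sum_zsmul hC, Int.cast_smul_eq_zsmul]
  simp [sub_smul, Pi.single_apply, ite_smul]

theorem coeff_add_coeff_reflection (hindep : LinearIndependent ℚ sroot)
    (hcoeff : ∀ β ∈ Φ, β = ∑ b, coeff β b • sroot b)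
    (hC : ∀ a b, (C a b : ℚ) = cpair a (sroot b)) (hCdiag : ∀ a, C a a = 2)
    (hCoff : ∀ a b, a ≠ b → C a b ≤ 0) (hs : ∀ a v, s a v = v - cpair a v • sroot a)
    (hβ : β ∈ Φ) (hsβ : s a β ∈ Φ) :
    coeff β a + coeff (s a β) a
      = -∑ b ∈ univ.filter (fun b => C a b < 0), C a b * coeff β b := by
  classical
  have hsβa := congrFun (coeff_reflection hindep hcoeff hC hs hβ hsβ) a
  rw [Pi.sub_apply, Pi.single_eq_same,
    sum_mul_eq_two_mul_add_sum_filter_neg hCdiag hCoff] at hsβa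
  omega

theorem eq_simple_of_coeff_eq_zero (hcoeff : ∀ β ∈ Φ, β = ∑ b, coeff β b • sroot b)
    (hred : ∀ β ∈ Φ, ∀ t : ℚ, t • β ∈ Φ → t = 1 ∨ t = -1) (hsimple : sroot a ∈ Φ)
    (hβ : β ∈ Φ) (hβa : 0 ≤ coeff β a) (hβ0 : ∀ b, b ≠ a → coeff β b = 0) :
    β = sroot a := by
  have hβ_eq : β = coeff β a • sroot a := by
    conv_lhs => rw [hcoeff β hβ]
    exact sum_eq_single_of_mem a (mem_univ a) fun b _ hb => by rw [hβ0 b hb, zero_smul]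
  have hmem : (coeff β a : ℚ) • sroot a ∈ Φ := by rwa [Int.cast_smul_eq_zsmul, ← hβ_eq]
  have hβa_one : coeff β a = 1 := by
    rcases hred _ hsimple _ hmem with h | h <;> norm_cast at h
    omega
  rwa [hβa_one, one_smul] at hβ_eq

theorem reflection_mem_pos (hindep : LinearIndependent ℚ sroot)
    (hcoeff : ∀ β ∈ Φ, β = ∑ b, coeff β b • sroot b)
    (hC : ∀ a b, (C a b : ℚ) = cpair a (sroot b)) (hs : ∀ a v, s a v = v - cpair a v • sroot a)
    (hsimple : sroot a ∈ Φ) (hpossub : Φpos ⊆ Φ)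
    (hsign : ∀ β ∈ Φ, β ∈ Φpos ∨ -β ∈ Φpos) (hnonneg : ∀ β ∈ Φpos, ∀ b, 0 ≤ coeff β b)
    (hred : ∀ β ∈ Φ, ∀ t : ℚ, t • β ∈ Φ → t = 1 ∨ t = -1) (hsΦ : ∀ a, ∀ β ∈ Φ, s a β ∈ Φ)
    (hβ : β ∈ Φpos) (hβa : β ≠ sroot a) : s a β ∈ Φpos := by
  classical
  have hsβ := hsΦ a β (hpossub hβ)
  refine (hsign _ hsβ).resolve_right fun hneg => hβa ?_
  refine eq_simple_of_coeff_eq_zero hcoeff hred hsimple (hpossub hβ)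
    (hnonneg β hβ a) fun b hb => ?_
  have hsβb : coeff (s a β) b = coeff β b := by
    rw [coeff_reflection hindep hcoeff hC hs (hpossub hβ) hsβ, Pi.sub_apply,
      Pi.single_eq_of_ne hb, sub_zero]
  have hnsβb : coeff (-s a β) b = -coeff β b := by
    rw [coeff_neg hindep hcoeff hsβ (hpossub hneg), Pi.neg_apply, hsβb]
  have := hnonneg β hβ b
  have := hnonneg _ hneg b
  omega

theorem reflection_ne_simple (hindep : LinearIndependent ℚ sroot)
    (hcoeff : ∀ β ∈ Φ, β = ∑ b, coeff β b • sroot b)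
    (hC : ∀ a b, (C a b : ℚ) = cpair a (sroot b)) (hCdiag : ∀ a, C a a = 2)
    (hs : ∀ a v, s a v = v - cpair a v • sroot a) (hsimple : sroot a ∈ Φ)
    (hpossub : Φpos ⊆ Φ) (hnonneg : ∀ β ∈ Φpos, ∀ b, 0 ≤ coeff β b) (hβ : β ∈ Φpos) :
    s a β ≠ sroot a := by
  classical
  intro hsβ
  have hβ_eq : β = -sroot a := by
    rw [← reflection_involutive hC hCdiag hs a β, hsβ, reflection_simple_self hC hCdiag hs]
  have hβa := hnonneg β hβ a
  rw [hβ_eq, coeff_neg hindep hcoeff hsimple (hpossub (hβ_eq ▸ hβ)),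
    coeff_simple hindep hcoeff hsimple] at hβa
  simp at hβa

end RootCoefficients

theorem MY_denominator_type_identity_in_group_algebra_general
    {I V : Type*} [Fintype I]
    [AddCommGroup V] [Module ℚ V]
    (Φ Φpos : Finset V) (sroot : I → V) (cpair : I → V →ₗ[ℚ] ℚ)
    (coeff : V → I → ℤ) (C : I → I → ℤ) (s : I → V ≃ₗ[ℚ] V)
    -- axioms of a reduced crystallographic root system with base:
    (hindep : LinearIndependent ℚ sroot)
    (hC : ∀ a b, (C a b : ℚ) = cpair a (sroot b))
    (hCdiag : ∀ a, C a a = 2)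
    (hCoff : ∀ a b, a ≠ b → C a b ≤ 0)
    (hs : ∀ a v, s a v = v - cpair a v • sroot a)
    (hsimple : ∀ a, sroot a ∈ Φpos)
    (hpossub : Φpos ⊆ Φ)
    (hsign : ∀ β ∈ Φ, β ∈ Φpos ∨ -β ∈ Φpos)
    (hcoeff : ∀ β ∈ Φ, β = ∑ b, coeff β b • sroot b)
    (hnonneg : ∀ β ∈ Φpos, ∀ b, 0 ≤ coeff β b)
    (hred : ∀ β ∈ Φ, ∀ t : ℚ, t • β ∈ Φ → t = 1 ∨ t = -1)
    (hsΦ : ∀ a, ∀ β ∈ Φ, s a β ∈ Φ)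
    -- the exponents `m_a(α) = -∑_{b : C a b < 0} C a b * [α]_b`, nonnegative integers:
    (m : I → V → ℕ)
    (hm : ∀ a, ∀ α ∈ Φpos, (m a α : ℤ)
        = -∑ b ∈ Finset.univ.filter (fun b => C a b < 0), C a b * coeff α b)
    (a : I) :
    (∏ α ∈ Φpos, (1 - expZ (-α)) ^ (coeff α a).toNat)
        * ∏ α ∈ Φpos, (1 - expZ (-(s a α))) ^ (coeff α a).toNat
      = (1 - expZ (sroot a)) * (1 - expZ (-(sroot a)))
        * ∏ α ∈ Φpos, (1 - expZ (-α)) ^ (m a α) := by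
  classical
  have hcoeff_simple := coeff_simple (a := a) hindep hcoeff (hpossub (hsimple a))
  have hcoeff_aa : (coeff (sroot a) a).toNat = 1 := by simp [hcoeff_simple]
  have hm_simple : m a (sroot a) = 0 := by
    have hsum := hm a _ (hsimple a)
    rw [hcoeff_simple, sum_eq_zero fun b hb => ?_] at hsum
    · omega
    have hba : b ≠ a := by rintro rfl; simp [hCdiag] at hb
    rw [Pi.single_eq_of_ne hba, mul_zero]
  have hmaps : ∀ α ∈ Φpos.erase (sroot a), s a α ∈ Φpos.erase (sroot a) := fun α hα => by
    obtain ⟨hαa, hα⟩ := mem_erase.mp hα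
    exact mem_erase.mpr
      ⟨reflection_ne_simple hindep hcoeff hC hCdiag hs (hpossub (hsimple a)) hpossub hnonneg hα,
        reflection_mem_pos hindep hcoeff hC hs (hpossub (hsimple a)) hpossub hsign hnonneg hred
          hsΦ hα hαa⟩
  have hexp : ∀ α ∈ Φpos.erase (sroot a), (coeff α a).toNat + (coeff (s a α) a).toNat = m a α :=
    fun α hα => by
      have hα' := mem_of_mem_erase hα
      have := coeff_add_coeff_reflection hindep hcoeff hC hCdiag hCoff hs (hpossub hα')
        (hsΦ a α (hpossub hα'))
      have := hm a α hα'
      have := hnonneg α hα' a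
      have := hnonneg _ (mem_of_mem_erase (hmaps α hα)) a
      omega
  rw [← mul_prod_erase _ _ (hsimple a), ← mul_prod_erase _ _ (hsimple a),
    ← mul_prod_erase _ _ (hsimple a), ← prod_pow_mul_prod_comp_pow hmaps
      (fun α _ => reflection_involutive hC hCdiag hs a α) _ hexp]
  simp only [hcoeff_aa, hm_simple, reflection_simple_self hC hCdiag hs, neg_neg, pow_one,
    pow_zero, one_mul]
  ring

theorem MY_denominator_type_identity_in_group_algebra
    {I V : Type*} [Fintype I] [DecidableEq I]
    [AddCommGroup V] [Module ℚ V] [FiniteDimensional ℚ V]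
    (Φ Φpos : Finset V) (sroot : I → V) (cpair : I → V →ₗ[ℚ] ℚ)
    (coeff : V → I → ℤ) (C : I → I → ℤ) (s : I → V ≃ₗ[ℚ] V)
    -- axioms of a reduced crystallographic root system with base:
    (hindep : LinearIndependent ℚ sroot)
    (hspan : Submodule.span ℚ (Set.range sroot) = ⊤)
    (hC : ∀ a b, (C a b : ℚ) = cpair a (sroot b))
    (hCdiag : ∀ a, C a a = 2)
    (hCoff : ∀ a b, a ≠ b → C a b ≤ 0)
    (hs : ∀ a v, s a v = v - cpair a v • sroot a)
    (hsimple : ∀ a, sroot a ∈ Φpos)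
    (hpossub : Φpos ⊆ Φ)
    (hzero : (0 : V) ∉ Φ)
    (hsymm : ∀ β ∈ Φ, -β ∈ Φ)
    (hsign : ∀ β ∈ Φ, β ∈ Φpos ∨ -β ∈ Φpos)
    (hcoeff : ∀ β ∈ Φ, β = ∑ b, coeff β b • sroot b)
    (hnonneg : ∀ β ∈ Φpos, ∀ b, 0 ≤ coeff β b)
    (hred : ∀ β ∈ Φ, ∀ t : ℚ, t • β ∈ Φ → t = 1 ∨ t = -1)
    (hsΦ : ∀ a, ∀ β ∈ Φ, s a β ∈ Φ)
    -- the exponents `m_a(α) = -∑_{b : C a b < 0} C a b * [α]_b`, nonnegative integers: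
    (m : I → V → ℕ)
    (hm : ∀ a, ∀ α ∈ Φpos, (m a α : ℤ)
        = -∑ b ∈ Finset.univ.filter (fun b => C a b < 0), C a b * coeff α b)
    (a : I) :
    (∏ α ∈ Φpos, (1 - expZ (-α)) ^ (coeff α a).toNat)
        * ∏ α ∈ Φpos, (1 - expZ (-(s a α))) ^ (coeff α a).toNat
      = (1 - expZ (sroot a)) * (1 - expZ (-(sroot a)))
        * ∏ α ∈ Φpos, (1 - expZ (-α)) ^ (m a α) :=
  MY_denominator_type_identity_in_group_algebra_general Φ Φpos sroot cpair coeff C s hindep hC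
    hCdiag hCoff hs hsimple hpossub hsign hcoeff hnonneg hred hsΦ m hm a
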